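/- Let T be a tree with diametrical path P. If mr^-(T) = mr^-(P), then T is a centipede; moreover, if |P| is odd, then T is a regular centipede. -/

import Mathlib

open Matrix SimpleGraph

attribute [local instance] Classical.propDecidable

/-- The set of real skew-symmetric matrices whose off-diagonal zero-nonzero
pattern is described by the graph `G`. -/
def IsSkewRep {V : Type*} [Fintype V] (G : SimpleGraph V) (A : Matrix V V ℝ) : Prop :=
  Aᵀ = -A ∧ ∀ i j, i ≠ j → (A i j ≠ 0 ↔ G.Adj i j)

/-- The minimum skew rank of a simple graph. -/
noncomputable def minSkewRank {V : Type*} [Fintype V] (G : SimpleGraph V) : ℕ :=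
  sInf {r | ∃ A : Matrix V V ℝ, IsSkewRep G A ∧ A.rank = r}

/-- The maximum skew rank of a simple graph. -/
noncomputable def maxSkewRank {V : Type*} [Fintype V] (G : SimpleGraph V) : ℕ :=
  sSup {r | ∃ A : Matrix V V ℝ, IsSkewRep G A ∧ A.rank = r}

/-- The matching number of a simple graph. -/
noncomputable def matchNum {V : Type*} [Fintype V] (G : SimpleGraph V) : ℕ :=
  sSup {n | ∃ M : G.Subgraph, M.IsMatching ∧ M.edgeSet.ncard = n}

/-- `v` enumerates the vertices of an induced path `v 0 — v 1 — ⋯ — v (n-1)` in `T`. -/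
def IsInducedPathEnum {V : Type*} (T : SimpleGraph V) {n : ℕ} (v : Fin n → V) : Prop :=
  Function.Injective v ∧ ∀ i j : Fin n, T.Adj (v i) (v j) ↔ (pathGraph n).Adj i j

/-- `v` enumerates a diametrical path of `T`: an induced path of length `diam T`. -/
def IsDiametricalPathEnum {V : Type*} [Fintype V] (T : SimpleGraph V) {n : ℕ}
    (v : Fin n → V) : Prop :=
  IsInducedPathEnum T v ∧ n = T.diam + 1

/-- `T` is a centipede with spine the path enumerated by `v`: every vertex off
the spine is a pendant vertex (a leg) attached to a nonpendant spine vertex. -/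
def IsCentipedeOn {V : Type*} [Fintype V] (T : SimpleGraph V) {n : ℕ} (v : Fin n → V) : Prop :=
  ∀ w : V, w ∉ Set.range v →
    (T.neighborSet w).ncard = 1 ∧
    ∃ i : Fin n, T.Adj w (v i) ∧ i.val ≠ 0 ∧ i.val ≠ n - 1

/-- The spine vertex `v i` is a joint: it has a leg attached. -/
def IsJoint {V : Type*} (T : SimpleGraph V) {n : ℕ} (v : Fin n → V) (i : Fin n) : Prop :=
  ∃ w : V, w ∉ Set.range v ∧ T.Adj (v i) w

/-- The centipede is regular: no two consecutive spine vertices are joints. -/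
def IsRegularOn {V : Type*} (T : SimpleGraph V) {n : ℕ} (v : Fin n → V) : Prop :=
  ∀ i j : Fin n, IsJoint T v i → IsJoint T v j → i.val + 1 ≠ j.val

/-!
A list of edges `(aᵢ, bᵢ)` of a graph in which the `bᵢ` are pairwise nonadjacent and no `aᵢ` is
adjacent to a later `bⱼ` forces every skew representation to have a nonsingular principal
submatrix of size twice its length, while `mr⁻(Pₙ) ≤ n`. Along a diametrical path `P` of `T`,
every other spine edge together with an edge reaching a vertex at distance two from `P` gives
such a list of length `⌊n/2⌋ + 1`; for odd `n`, legs at two consecutive spine vertices give one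
of length `(n + 1)/2`. So every vertex off `P` is adjacent to `P`; acyclicity makes it a leaf
with a unique spine neighbour, and maximality of `P` keeps that neighbour off its endpoints.
-/

theorem Matrix.two_mul_le_rank_of_skew {K ι : Type*} [Field K] [Fintype ι] {m : ℕ}
    (A : Matrix ι ι K) (hA : Aᵀ = -A) (a b : Fin m → ι) (hdiag : ∀ r, A (a r) (b r) ≠ 0)
    (htri : ∀ r c, r < c → A (a r) (b c) = 0) (hb : ∀ r c, A (b r) (b c) = 0) :
    2 * m ≤ A.rank := by
  have hba : ∀ r c, A (b r) (a c) = -A (a c) (b r) := fun r c => congrFun₂ hA (a c) (b r)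
  set S := A.submatrix (Sum.elim b a) (Sum.elim a b)
  have hS : S = fromBlocks (A.submatrix b a) 0 (A.submatrix a a) (A.submatrix a b) := by
    ext (r | r) (c | c) <;> simp [S, hb]
  have hdet : S.det ≠ 0 := by
    have hup : (A.submatrix b a).IsUpperTriangular := fun r c hcr => by
      simp only [submatrix_apply, hba, htri c r hcr, neg_zero]
    have hlow : (A.submatrix a b).IsLowerTriangular := fun r c hrc => htri r c hrc
    rw [hS, det_fromBlocks_zero₁₂, det_of_isUpperTriangular hup, det_of_isLowerTriangular _ hlow]
    simp only [submatrix_apply, hba]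
    exact mul_ne_zero (Finset.prod_ne_zero_iff.2 fun r _ => neg_ne_zero.2 (hdiag r))
      (Finset.prod_ne_zero_iff.2 fun r _ => hdiag r)
  calc 2 * m = Fintype.card (Fin m ⊕ Fin m) := by simp; ring
    _ = S.rank := (rank_of_isUnit S ((isUnit_iff_isUnit_det S).2 hdet.isUnit)).symm
    _ ≤ A.rank := rank_submatrix_le A _ _

section SkewRep

variable {V : Type*} [Fintype V] {G : SimpleGraph V} {A : Matrix V V ℝ}

theorem IsSkewRep.apply_ne_zero (hA : IsSkewRep G A) {x y : V} (h : G.Adj x y) : A x y ≠ 0 :=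
  (hA.2 x y h.ne).2 h

theorem IsSkewRep.apply_eq_zero (hA : IsSkewRep G A) {x y : V} (h : ¬G.Adj x y) : A x y = 0 := by
  by_cases hxy : x = y
  · subst hxy
    have : A x x = -A x x := congrFun₂ hA.1 x x
    linarith
  · exact not_not.1 fun h' => h ((hA.2 x y hxy).1 h')

theorem exists_isSkewRep (G : SimpleGraph V) : ∃ A, IsSkewRep G A := by
  let σ : V → ℝ := fun x => (Fintype.equivFin V x : ℕ)
  have hσ : σ.Injective :=
    Nat.cast_injective.comp (Fin.val_injective.comp (Fintype.equivFin V).injective)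
  refine ⟨Matrix.of fun x y => if G.Adj x y then σ y - σ x else 0, ?_, fun x y hxy => ?_⟩
  · ext x y
    by_cases h : G.Adj x y <;> simp [h, G.adj_comm y x]
  · by_cases h : G.Adj x y <;> simp [h, sub_eq_zero, hσ.ne hxy.symm]

theorem minSkewRank_le_card (G : SimpleGraph V) : minSkewRank G ≤ Fintype.card V := by
  obtain ⟨A, hA⟩ := exists_isSkewRep G
  have hle : minSkewRank G ≤ A.rank := Nat.sInf_le ⟨A, hA, rfl⟩
  exact hle.trans (rank_le_card_width A)

theorem le_minSkewRank {k : ℕ} (h : ∀ A, IsSkewRep G A → k ≤ A.rank) : k ≤ minSkewRank G := by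
  obtain ⟨A, hA⟩ := exists_isSkewRep G
  obtain ⟨B, hB, hBr⟩ := Nat.sInf_mem (⟨A.rank, A, hA, rfl⟩ :
    {r | ∃ A : Matrix V V ℝ, IsSkewRep G A ∧ A.rank = r}.Nonempty)
  rw [minSkewRank, ← hBr]
  exact h B hB

end SkewRep

/-- For `l = [(a₁, b₁), …, (aₖ, bₖ)]` and a skew representation `A` of `G`, the submatrix of `A`
with rows `b, a` and columns `a, b` is block triangular with triangular diagonal blocks
`(A bᵢ aⱼ)`, `(A aᵢ bⱼ)` of nonzero diagonal, so `rank A ≥ 2k`. -/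
def IsTriangularMatching {V : Type*} (G : SimpleGraph V) (l : List (V × V)) : Prop :=
  (∀ e ∈ l, G.Adj e.1 e.2) ∧ l.Pairwise fun e f => ¬G.Adj e.1 f.2 ∧ ¬G.Adj e.2 f.2

section TriangularMatching

variable {V : Type*} {G : SimpleGraph V}

theorem isTriangularMatching_append {l₁ l₂ : List (V × V)} :
    IsTriangularMatching G (l₁ ++ l₂) ↔ IsTriangularMatching G l₁ ∧ IsTriangularMatching G l₂ ∧
      ∀ e ∈ l₁, ∀ f ∈ l₂, ¬G.Adj e.1 f.2 ∧ ¬G.Adj e.2 f.2 := by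
  simp only [IsTriangularMatching, List.mem_append, List.pairwise_append]
  grind

theorem IsTriangularMatching.two_mul_length_le_minSkewRank [Fintype V] {l : List (V × V)}
    (hl : IsTriangularMatching G l) : 2 * l.length ≤ minSkewRank G := by
  refine le_minSkewRank fun A hA => ?_
  have hpw := List.pairwise_iff_getElem.1 hl.2
  refine A.two_mul_le_rank_of_skew hA.1 (fun r => l[r].1) (fun r => l[r].2)
    (fun r => hA.apply_ne_zero (hl.1 _ (List.getElem_mem _)))
    (fun r c hrc => hA.apply_eq_zero (hpw r c r.2 c.2 hrc).1) (fun r c => hA.apply_eq_zero ?_)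
  rcases lt_trichotomy r c with h | rfl | h
  · exact (hpw _ _ _ _ h).2
  · exact G.irrefl
  · exact fun h' => (hpw _ _ _ _ h).2 h'.symm

end TriangularMatching

theorem SimpleGraph.IsAcyclic.support_subset_of_isPath {V : Type*} {G : SimpleGraph V}
    (hG : G.IsAcyclic) {x y : V} {p : G.Walk x y} (hp : p.IsPath) (q : G.Walk x y) :
    p.support ⊆ q.support := by
  have : p = q.bypass := congrArg Subtype.val
    ((hG.subsingleton_path x y).elim ⟨p, hp⟩ ⟨q.bypass, q.bypass_isPath⟩)
  exact this ▸ q.support_bypass_subset_support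

theorem SimpleGraph.IsTree.length_le_diam {V : Type*} [Finite V] {G : SimpleGraph V}
    (hG : G.IsTree) {x y : V} {p : G.Walk x y} (hp : p.IsPath) : p.length ≤ G.diam := by
  have : Nonempty V := ⟨x⟩
  obtain ⟨q, hq, hlen⟩ := (hG.1 x y).exists_path_of_dist
  have : p = q := congrArg Subtype.val ((hG.2.subsingleton_path x y).elim ⟨p, hp⟩ ⟨q, hq⟩)
  rw [this, hlen]
  exact dist_le_diam (connected_iff_ediam_ne_top.1 hG.1)

theorem SimpleGraph.Walk.val_le_val_add_length_of_pathGraph {n : ℕ} {i j : Fin n}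
    (p : (pathGraph n).Walk i j) : j.val ≤ i.val + p.length := by
  induction p with
  | nil => simp
  | cons h _ ih =>
    rw [pathGraph_adj] at h
    simp only [length_cons]
    omega

section Spine

variable {V : Type*} {T : SimpleGraph V} {n : ℕ} {v : Fin n → V}

theorem IsInducedPathEnum.adj_iff (hv : IsInducedPathEnum T v) {i j : Fin n} :
    T.Adj (v i) (v j) ↔ i.val + 1 = j.val ∨ j.val + 1 = i.val :=
  (hv.2 i j).trans pathGraph_adj

theorem IsInducedPathEnum.exists_isPath (hv : IsInducedPathEnum T v) (i j : Fin n) :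
    ∃ q : T.Walk (v i) (v j), q.IsPath ∧ j.val ≤ i.val + q.length ∧
      i.val ≤ j.val + q.length ∧ ∀ x ∈ q.support, x ∈ Set.range v := by
  let f : pathGraph n →g T := ⟨v, fun h => (hv.2 _ _).2 h⟩
  obtain ⟨p, hp, -⟩ := (pathGraph_preconnected n i j).exists_path_of_dist
  refine ⟨(p.map f).copy rfl rfl, by simpa using hp.map (f := f) hv.1, ?_, ?_, ?_⟩
  · simpa using p.val_le_val_add_length_of_pathGraph
  · simpa using p.reverse.val_le_val_add_length_of_pathGraph
  · simp only [Walk.support_copy, Walk.support_map, List.mem_map]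
    rintro _ ⟨k, -, rfl⟩
    exact ⟨k, rfl⟩

theorem IsInducedPathEnum.eq_of_adj_of_adj (hT : T.IsAcyclic) (hv : IsInducedPathEnum T v)
    {w : V} (hw : w ∉ Set.range v) {i j : Fin n} (hi : T.Adj w (v i)) (hj : T.Adj w (v j)) :
    i = j := by
  by_contra hij
  obtain ⟨q, -, -, -, hq⟩ := hv.exists_isPath i j
  have hp : (Walk.cons hi.symm (Walk.cons hj Walk.nil)).IsPath := by
    simp [Walk.isPath_def, hv.1.ne hij, hi.symm.ne, hj.ne]
  exact hw (hq w (hT.support_subset_of_isPath hp q (by simp)))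

theorem IsInducedPathEnum.not_adj_of_adj_spine (hT : T.IsAcyclic) (hv : IsInducedPathEnum T v)
    {w x : V} (hw : w ∉ Set.range v) (hx : x ∉ Set.range v) {i j : Fin n}
    (hwi : T.Adj w (v i)) (hxj : T.Adj x (v j)) : ¬T.Adj w x := by
  intro hwx
  obtain ⟨q, -, -, -, hq⟩ := hv.exists_isPath i j
  have hix : v i ≠ x := fun h => hx ⟨i, h⟩
  have hp : (Walk.cons hwi.symm (Walk.cons hwx Walk.nil)).IsPath := by
    simp [Walk.isPath_def, hwi.symm.ne, hwx.ne, hix]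
  have hsub := hT.support_subset_of_isPath hp (q.concat hxj.symm)
    (show w ∈ (Walk.cons hwi.symm (Walk.cons hwx Walk.nil)).support by simp)
  rw [Walk.support_concat, List.mem_append, List.mem_singleton] at hsub
  exact hsub.elim (fun h => hw (hq w h)) hwx.ne

theorem IsDiametricalPathEnum.ne_end_of_adj [Fintype V] (hT : T.IsTree)
    (hv : IsDiametricalPathEnum T v) {w : V} (hw : w ∉ Set.range v) {i : Fin n}
    (hwi : T.Adj w (v i)) : i.val ≠ 0 ∧ i.val ≠ n - 1 := by
  have hn : n = T.diam + 1 := hv.2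
  have hlen : ∀ j : Fin n, ∃ d, d + 1 ≤ n - 1 ∧ j.val ≤ i.val + d ∧ i.val ≤ j.val + d := by
    intro j
    obtain ⟨q, hq, hji, hij, hsupp⟩ := hv.1.exists_isPath i j
    have hp : (Walk.cons hwi q).IsPath := hq.cons fun h => hw (hsupp w h)
    have := hT.length_le_diam hp
    exact ⟨q.length, by rw [Walk.length_cons] at this; omega, hji, hij⟩
  constructor
  · obtain ⟨d, _, _, -⟩ := hlen ⟨n - 1, by omega⟩
    grind
  · obtain ⟨d, _, -, _⟩ := hlen ⟨0, by omega⟩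
    grind

def spinePairs (v : Fin n → V) (s m : ℕ) (h : s + 2 * m ≤ n) : List (V × V) :=
  List.ofFn fun k : Fin m => (v ⟨s + 2 * k, by omega⟩, v ⟨s + 2 * k + 1, by omega⟩)

theorem exists_of_mem_spinePairs {s m : ℕ} {h : s + 2 * m ≤ n} {e : V × V}
    (he : e ∈ spinePairs v s m h) :
    ∃ i j : Fin n, e = (v i, v j) ∧ s ≤ i.val ∧ j.val = i.val + 1 ∧ j.val < s + 2 * m := by
  obtain ⟨k, rfl⟩ := List.mem_ofFn.1 he
  exact ⟨_, _, rfl, by simp, rfl, by simp; omega⟩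

theorem IsInducedPathEnum.isTriangularMatching_spinePairs (hv : IsInducedPathEnum T v)
    {s m : ℕ} (h : s + 2 * m ≤ n) : IsTriangularMatching T (spinePairs v s m h) := by
  refine ⟨fun e he => ?_, List.pairwise_ofFn.2 fun k l hkl => ?_⟩
  · obtain ⟨i, j, rfl, -, hij, -⟩ := exists_of_mem_spinePairs he
    exact hv.adj_iff.2 (Or.inl hij.symm)
  · rw [Fin.lt_def] at hkl
    simp only [hv.adj_iff]
    omega

theorem IsInducedPathEnum.exists_isTriangularMatching_of_not_adj_spine
    (hv : IsInducedPathEnum T v) {u x : V} (hux : T.Adj u x) (hx : ∀ k, ¬T.Adj x (v k)) :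
    ∃ l, IsTriangularMatching T l ∧ l.length = n / 2 + 1 := by
  refine ⟨spinePairs v 0 (n / 2) (by omega) ++ [(u, x)], ?_, by simp [spinePairs]⟩
  refine isTriangularMatching_append.2
    ⟨hv.isTriangularMatching_spinePairs _, by simpa [IsTriangularMatching] using hux, ?_⟩
  intro e he f hf
  obtain ⟨i, j, rfl, -⟩ := exists_of_mem_spinePairs he
  rw [List.mem_singleton] at hf
  subst hf
  exact ⟨fun h => hx i h.symm, fun h => hx j h.symm⟩

theorem IsInducedPathEnum.exists_isTriangularMatching_of_adj_legs
    (hv : IsInducedPathEnum T v) {m : ℕ} (hn : n = 2 * m + 1) {o e : Fin n} (ho : Odd o.val)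
    (hoe : (pathGraph n).Adj o e) {L M : V} (hL : ∀ k, T.Adj L (v k) ↔ k = o)
    (hM : ∀ k, T.Adj M (v k) ↔ k = e) (hLM : ¬T.Adj L M) :
    ∃ l, IsTriangularMatching T l ∧ l.length = m + 1 := by
  obtain ⟨p, hp⟩ := ho
  rw [pathGraph_adj] at hoe
  have hL' : ∀ k : Fin n, k.val ≠ o.val → ¬T.Adj L (v k) := fun k hk h =>
    hk (congrArg Fin.val ((hL k).1 h))
  have hM' : ∀ k : Fin n, k.val ≠ e.val → ¬T.Adj (v k) M := fun k hk h =>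
    hk (congrArg Fin.val ((hM k).1 h.symm))
  refine ⟨spinePairs v 0 p (by omega) ++ ([(L, v o), (v e, M)] ++
    spinePairs v (2 * p + 3) (m - p - 1) (by omega)), ?_, by simp [spinePairs]; omega⟩
  -- covers every spine vertex except the neighbour of `v o` other than `v e`
  simp only [isTriangularMatching_append]
  refine ⟨hv.isTriangularMatching_spinePairs _, ⟨?_, hv.isTriangularMatching_spinePairs _, ?_⟩, ?_⟩
  · simp only [IsTriangularMatching, List.mem_cons, List.not_mem_nil, or_false,
      List.pairwise_cons, forall_eq_or_imp, forall_eq, List.Pairwise.nil]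
    exact ⟨⟨(hL o).2 rfl, ((hM e).2 rfl).symm⟩, ⟨hLM, hM' o (by omega)⟩, by simp⟩
  · intro f hf g hg
    obtain ⟨i, j, rfl, hi, hij, -⟩ := exists_of_mem_spinePairs hg
    simp only [List.mem_cons, List.not_mem_nil, or_false] at hf
    rcases hf with rfl | rfl
    · exact ⟨hL' _ (by omega), by rw [hv.adj_iff]; omega⟩
    · exact ⟨by rw [hv.adj_iff]; omega, fun h => hM' _ (by omega) h.symm⟩
  · intro f hf g hg
    obtain ⟨i, j, rfl, -, hij, hj⟩ := exists_of_mem_spinePairs hf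
    simp only [List.mem_append, List.mem_cons, List.not_mem_nil, or_false] at hg
    rcases hg with (rfl | rfl) | hg
    · simp only [hv.adj_iff]
      omega
    · exact ⟨hM' _ (by omega), hM' _ (by omega)⟩
    · obtain ⟨i', j', rfl, hi', hij', -⟩ := exists_of_mem_spinePairs hg
      simp only [hv.adj_iff]
      omega

theorem IsDiametricalPathEnum.isCentipedeOn [Fintype V] (hT : T.IsTree)
    (hv : IsDiametricalPathEnum T v)
    (hbound : ∀ l, IsTriangularMatching T l → 2 * l.length ≤ n) : IsCentipedeOn T v := by
  have hspine : ∀ u x, T.Adj u x → ∃ k, T.Adj x (v k) := by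
    intro u x hux
    by_contra! hx
    obtain ⟨l, hl, hlen⟩ := hv.1.exists_isTriangularMatching_of_not_adj_spine hux hx
    have := hbound l hl
    omega
  intro w hw
  obtain ⟨p⟩ := hT.1 w (v ⟨0, by have := hv.2; omega⟩)
  obtain ⟨k, hk⟩ := hspine _ w (p.adj_snd (Walk.not_nil_of_ne fun h => hw ⟨_, h.symm⟩)).symm
  have hnbr : T.neighborSet w = {v k} := by
    ext y
    refine ⟨fun hy => ?_, fun hy => hy ▸ hk⟩
    by_cases hyv : y ∈ Set.range v
    · obtain ⟨j, rfl⟩ := hyv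
      rw [Set.mem_singleton_iff, hv.1.eq_of_adj_of_adj hT.2 hw hy hk]
    · obtain ⟨j, hj⟩ := hspine w y hy
      exact absurd hy (hv.1.not_adj_of_adj_spine hT.2 hw hyv hk hj)
  exact ⟨by rw [hnbr, Set.ncard_singleton], k, hk, hv.ne_end_of_adj hT hw hk⟩

theorem IsInducedPathEnum.isRegularOn (hT : T.IsAcyclic) (hv : IsInducedPathEnum T v)
    (hn : Odd n) (hbound : ∀ l, IsTriangularMatching T l → 2 * l.length ≤ n) :
    IsRegularOn T v := by
  rintro i j ⟨L, hL, hiL⟩ ⟨M, hM, hjM⟩ hij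
  obtain ⟨m, hm⟩ := hn
  have hleg : ∀ {w k}, w ∉ Set.range v → T.Adj (v k) w → ∀ k', T.Adj w (v k') ↔ k' = k :=
    fun hw hkw k' => ⟨fun h => hv.eq_of_adj_of_adj hT hw h hkw.symm, fun h => h ▸ hkw.symm⟩
  have hLM : ¬T.Adj L M := hv.not_adj_of_adj_spine hT hL hM hiL.symm hjM.symm
  have hadj : (pathGraph n).Adj i j := pathGraph_adj.2 (Or.inl hij)
  obtain ⟨l, hl, hlen⟩ : ∃ l, IsTriangularMatching T l ∧ l.length = m + 1 := by
    rcases Nat.even_or_odd i.val with hi | hi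
    · exact hv.exists_isTriangularMatching_of_adj_legs hm (hij ▸ hi.add_one) hadj.symm
        (hleg hM hjM) (hleg hL hiL) fun h => hLM h.symm
    · exact hv.exists_isTriangularMatching_of_adj_legs hm hi hadj (hleg hL hiL) (hleg hM hjM) hLM
  have := hbound l hl
  omega

end Spine

/-- If `T` is a tree with diametrical path `P` (enumerated by `v`) such that
`mr⁻(T) = mr⁻(P)`, then `T` is a centipede; moreover if `|P|` is odd then `T`
is a regular centipede. -/
theorem centipede_of_minSkewRank_eq {V : Type*} [Fintype V] (T : SimpleGraph V)
    (hT : T.IsTree) {n : ℕ} (v : Fin n → V) (hv : IsDiametricalPathEnum T v)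
    (h : minSkewRank T = minSkewRank (pathGraph n)) :
    IsCentipedeOn T v ∧ (Odd n → IsRegularOn T v) := by
  have hbound : ∀ l, IsTriangularMatching T l → 2 * l.length ≤ n := fun l hl =>
    calc 2 * l.length ≤ minSkewRank T := hl.two_mul_length_le_minSkewRank
      _ = minSkewRank (pathGraph n) := h
      _ ≤ Fintype.card (Fin n) := minSkewRank_le_card _
      _ = n := Fintype.card_fin n
  exact ⟨hv.isCentipedeOn hT hbound, fun hn => hv.1.isRegularOn hT.2 hn hbound⟩
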